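/- arXiv:1803.01551 — 3 statements merged into one kernel-verified Lean document; each statement's English description precedes it below -/
import Mathlib

section
/- Let A, B be compact operators on a separable Hilbert space whose singular value sequences satisfy μ(k,A) ≤ ‖A‖_{1,∞}/(k+1) for all k. If B is logarithmically submajorized by A (i.e., ∏_{k=0}^n μ(k,B) ≤ ∏_{k=0}^n μ(k,A) for all n ≥ 0), then ‖B‖_{1,∞} ≤ e·‖A‖_{1,∞}, i.e., sup_n (n+1)μ(n,B) ≤ e·sup_n (n+1)μ(n,A). -/
/-!
Write `a = ‖A‖_{1,∞}`. Since `μ(n,B)` is nonincreasing, `μ(n,B)^{n+1} ≤ ∏_{k ≤ n} μ(k,B)`, and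
the log-submajorization bounds this by `∏_{k ≤ n} μ(k,A) ≤ ∏_{k ≤ n} a/(k+1) = a^{n+1}/(n+1)!`.
The elementary Stirling bound `m^m ≤ e^m m!` then gives `((n+1) μ(n,B))^{n+1} ≤ (e a)^{n+1}`.
-/

open scoped ENNReal Nat
open Finset

/-- The `k`-th singular value of a bounded operator `T` on a Hilbert space, defined (for
compact `T`, equivalently to the eigenvalues of `|T|`) as the approximation number
`μ(k,T) = inf { ‖T − R‖ : rank R ≤ k }`. -/
noncomputable def singVal {H : Type*} [NormedAddCommGroup H] [InnerProductSpace ℂ H]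
    (k : ℕ) (T : H →L[ℂ] H) : ℝ :=
  sInf {c : ℝ | ∃ R : H →L[ℂ] H, Module.rank ℂ (LinearMap.range (R : H →ₗ[ℂ] H)) ≤ (k : Cardinal) ∧ c = ‖T - R‖}

/-- The `L_{1,∞}` quasi-norm `‖T‖_{1,∞} = sup_k (k+1) μ(k,T)`, valued in `ℝ≥0∞`. -/
noncomputable def norm1inf {H : Type*} [NormedAddCommGroup H] [InnerProductSpace ℂ H]
    (T : H →L[ℂ] H) : ℝ≥0∞ :=
  ⨆ k : ℕ, ENNReal.ofReal (((k : ℝ) + 1) * singVal k T)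

section SingularValues

variable {H : Type*} [NormedAddCommGroup H] [InnerProductSpace ℂ H]

lemma singVal_nonneg (k : ℕ) (T : H →L[ℂ] H) : 0 ≤ singVal k T :=
  Real.sInf_nonneg <| by
    rintro c ⟨R, -, rfl⟩
    exact norm_nonneg _

lemma singVal_antitone (T : H →L[ℂ] H) : Antitone fun k => singVal k T := by
  intro k n hkn
  apply csInf_le_csInf
  · exact ⟨0, by rintro c ⟨R, -, rfl⟩; exact norm_nonneg _⟩
  · refine ⟨‖T - 0‖, 0, ?_, rfl⟩
    simp
  · rintro c ⟨R, hR, rfl⟩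
    exact ⟨R, hR.trans (by exact_mod_cast hkn), rfl⟩

lemma add_one_mul_singVal_le_toReal_norm1inf (T : H →L[ℂ] H) (hT : norm1inf T ≠ ∞) (k : ℕ) :
    ((k : ℝ) + 1) * singVal k T ≤ (norm1inf T).toReal :=
  (ENNReal.ofReal_le_iff_le_toReal hT).mp <|
    le_iSup (fun k : ℕ => ENNReal.ofReal (((k : ℝ) + 1) * singVal k T)) k

lemma norm1inf_le_ofReal {T : H →L[ℂ] H} {c : ℝ}
    (h : ∀ k : ℕ, ((k : ℝ) + 1) * singVal k T ≤ c) : norm1inf T ≤ ENNReal.ofReal c :=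
  iSup_le fun k => ENNReal.ofReal_le_ofReal (h k)

end SingularValues

lemma pow_succ_le_prod_range_of_antitone {s : ℕ → ℝ} (hs0 : ∀ k, 0 ≤ s k) (hs : Antitone s)
    (n : ℕ) : s n ^ (n + 1) ≤ ∏ k ∈ range (n + 1), s k := by
  calc s n ^ (n + 1) = ∏ _k ∈ range (n + 1), s n := by rw [prod_const, card_range]
    _ ≤ ∏ k ∈ range (n + 1), s k :=
      prod_le_prod (fun _ _ => hs0 n) fun _ hk => hs (Nat.le_of_lt_succ (mem_range.mp hk))

lemma prod_range_mul_factorial_le_pow {t : ℕ → ℝ} {C : ℝ} (ht0 : ∀ k, 0 ≤ t k)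
    (hC : ∀ k : ℕ, ((k : ℝ) + 1) * t k ≤ C) (m : ℕ) :
    (∏ k ∈ range m, t k) * m ! ≤ C ^ m := by
  have hfac : ((m ! : ℕ) : ℝ) = ∏ k ∈ range m, ((k : ℝ) + 1) := by
    rw [← prod_range_add_one_eq_factorial]
    push_cast
    rfl
  calc (∏ k ∈ range m, t k) * m ! = ∏ k ∈ range m, ((k : ℝ) + 1) * t k := by
        rw [hfac, ← prod_mul_distrib]
        simp only [mul_comm]
    _ ≤ ∏ _k ∈ range m, C :=
      prod_le_prod (fun k _ => mul_nonneg (by positivity) (ht0 k)) fun k _ => hC k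
    _ = C ^ m := by rw [prod_const, card_range]

lemma pow_le_exp_one_pow_mul_factorial (m : ℕ) : (m : ℝ) ^ m ≤ Real.exp 1 ^ m * m ! := by
  rw [Real.exp_one_pow, ← div_le_iff₀ (by positivity)]
  exact Real.pow_div_factorial_le_exp _ (Nat.cast_nonneg m) m

lemma add_one_mul_le_exp_one_mul_of_prod_le {s t : ℕ → ℝ} {C : ℝ} (hs0 : ∀ k, 0 ≤ s k)
    (hs : Antitone s) (ht0 : ∀ k, 0 ≤ t k) (hC : ∀ k : ℕ, ((k : ℝ) + 1) * t k ≤ C)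
    (hlog : ∀ n, ∏ k ∈ range (n + 1), s k ≤ ∏ k ∈ range (n + 1), t k) (n : ℕ) :
    ((n : ℝ) + 1) * s n ≤ Real.exp 1 * C := by
  have hC0 : 0 ≤ C := (mul_nonneg zero_le_one (ht0 0)).trans (by simpa using hC 0)
  have hstirling := pow_le_exp_one_pow_mul_factorial (n + 1)
  push_cast at hstirling
  refine le_of_pow_le_pow_left₀ n.succ_ne_zero (by positivity) ?_
  calc (((n : ℝ) + 1) * s n) ^ (n + 1) = ((n : ℝ) + 1) ^ (n + 1) * s n ^ (n + 1) := mul_pow ..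
    _ ≤ Real.exp 1 ^ (n + 1) * (n + 1)! * ∏ k ∈ range (n + 1), t k :=
      mul_le_mul hstirling ((pow_succ_le_prod_range_of_antitone hs0 hs n).trans (hlog n))
        (pow_nonneg (hs0 n) _) (by positivity)
    _ ≤ Real.exp 1 ^ (n + 1) * C ^ (n + 1) := by
      rw [mul_assoc, mul_comm ((n + 1)! : ℝ)]
      gcongr
      exact prod_range_mul_factorial_le_pow ht0 hC (n + 1)
    _ = (Real.exp 1 * C) ^ (n + 1) := (mul_pow ..).symm

theorem stmt_0_general {H : Type*} [NormedAddCommGroup H] [InnerProductSpace ℂ H]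
    (A B : H →L[ℂ] H)
    (hlog : ∀ n : ℕ, ∏ k ∈ Finset.range (n + 1), singVal k B ≤
      ∏ k ∈ Finset.range (n + 1), singVal k A) :
    norm1inf B ≤ ENNReal.ofReal (Real.exp 1) * norm1inf A := by
  rcases eq_or_ne (norm1inf A) ∞ with hA | hA
  · rw [hA, ENNReal.mul_top (by simp [Real.exp_pos])]
    exact le_top
  have hB := add_one_mul_le_exp_one_mul_of_prod_le (singVal_nonneg · B) (singVal_antitone B)
    (singVal_nonneg · A) (add_one_mul_singVal_le_toReal_norm1inf A hA) hlog
  calc norm1inf B ≤ ENNReal.ofReal (Real.exp 1 * (norm1inf A).toReal) := norm1inf_le_ofReal hB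
    _ = ENNReal.ofReal (Real.exp 1) * norm1inf A := by
      rw [ENNReal.ofReal_mul (Real.exp_pos 1).le, ENNReal.ofReal_toReal hA]

/-- If `A, B` are compact operators on a separable Hilbert space whose singular values
satisfy `μ(k,A) ≤ ‖A‖_{1,∞}/(k+1)`, and `B` is logarithmically submajorized by `A`, then
`‖B‖_{1,∞} ≤ e ‖A‖_{1,∞}`. -/
theorem stmt_0 {H : Type*} [NormedAddCommGroup H] [InnerProductSpace ℂ H] [CompleteSpace H]
    [TopologicalSpace.SeparableSpace H]
    (A B : H →L[ℂ] H) (hA : IsCompactOperator ⇑A) (hB : IsCompactOperator ⇑B)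
    (hA1 : ∀ k : ℕ, ENNReal.ofReal (((k : ℝ) + 1) * singVal k A) ≤ norm1inf A)
    (hlog : ∀ n : ℕ, ∏ k ∈ Finset.range (n + 1), singVal k B ≤
      ∏ k ∈ Finset.range (n + 1), singVal k A) :
    norm1inf B ≤ ENNReal.ofReal (Real.exp 1) * norm1inf A :=
  stmt_0_general A B hlog
end

section
/- Let s ↦ a(s) be a function from ℝ to bounded operators on a separable Hilbert space, continuous in the weak operator topology, with a(s) trace class for every s and ∫_ℝ ‖a(s)‖_1 ds < ∞. Then the weak integral A = ∫_ℝ a(s) ds is trace class, ‖A‖_1 ≤ ∫_ℝ ‖a(s)‖_1 ds, and Tr(A) = ∫_ℝ Tr(a(s)) ds. -/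
open MeasureTheory
open scoped ENNReal ComplexInnerProductSpace

noncomputable def traceNorm {H : Type*} [NormedAddCommGroup H] [InnerProductSpace ℂ H]
    (T : H →L[ℂ] H) : ℝ≥0∞ :=
  ⨆ (N : ℕ) (e : Fin N → H) (f : Fin N → H) (_ : Orthonormal ℂ e) (_ : Orthonormal ℂ f),
    ∑ i, (‖⟪T (e i), f i⟫‖₊ : ℝ≥0∞)

/-!
Every finite sum `∑ i, |⟪A eᵢ, fᵢ⟫|` over orthonormal families is at most
`∑ i, ∫ |⟪a(s) eᵢ, fᵢ⟫| ds = ∫ ∑ i, |⟪a(s) eᵢ, fᵢ⟫| ds ≤ ∫ ‖a(s)‖₁ ds`, which bounds `‖A‖₁`.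
For the trace, the diagonal series `∑ₙ |⟪a(s) eₙ, eₙ⟫|` is dominated by `‖a(s)‖₁`, whose
integral is finite, so the series and the integral may be interchanged.
-/

section TraceNorm

variable {H : Type*} [NormedAddCommGroup H] [InnerProductSpace ℂ H]

lemma sum_nnnorm_inner_le_traceNorm (T : H →L[ℂ] H) {ι : Type*} [Fintype ι] {v w : ι → H}
    (hv : Orthonormal ℂ v) (hw : Orthonormal ℂ w) :
    ∑ i, (‖⟪T (v i), w i⟫‖₊ : ℝ≥0∞) ≤ traceNorm T := by
  let σ := (Fintype.equivFin ι).symm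
  rw [← Fintype.sum_equiv σ (fun j => (‖⟪T (v (σ j)), w (σ j)⟫‖₊ : ℝ≥0∞)) _ fun _ => rfl]
  exact le_iSup_of_le (Fintype.card ι) <| le_iSup_of_le (v ∘ σ) <| le_iSup_of_le (w ∘ σ) <|
    le_iSup_of_le (hv.comp σ σ.injective) <| le_iSup_of_le (hw.comp σ σ.injective) le_rfl

lemma tsum_nnnorm_inner_le_traceNorm (T : H →L[ℂ] H) {ι : Type*} {v w : ι → H}
    (hv : Orthonormal ℂ v) (hw : Orthonormal ℂ w) :
    ∑' i, (‖⟪T (v i), w i⟫‖₊ : ℝ≥0∞) ≤ traceNorm T := by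
  rw [ENNReal.tsum_eq_iSup_sum]
  refine iSup_le fun s => ?_
  rw [← Finset.sum_coe_sort s]
  exact sum_nnnorm_inner_le_traceNorm T (hv.comp _ Subtype.val_injective)
    (hw.comp _ Subtype.val_injective)

lemma sum_norm_inner_le_toReal_traceNorm {T : H →L[ℂ] H} (hT : traceNorm T ≠ ⊤) {ι : Type*}
    [Fintype ι] {v w : ι → H} (hv : Orthonormal ℂ v) (hw : Orthonormal ℂ w) :
    ∑ i, ‖⟪T (v i), w i⟫‖ ≤ (traceNorm T).toReal := by
  have h := ENNReal.toReal_mono hT (sum_nnnorm_inner_le_traceNorm T hv hw)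
  rwa [← ENNReal.ofNNReal_finsetSum, ENNReal.coe_toReal, NNReal.coe_sum] at h

lemma norm_inner_le_toReal_traceNorm {T : H →L[ℂ] H} (hT : traceNorm T ≠ ⊤) {ξ η : H}
    (hξ : ‖ξ‖ = 1) (hη : ‖η‖ = 1) :
    ‖⟪T ξ, η⟫‖ ≤ (traceNorm T).toReal := by
  simpa using sum_norm_inner_le_toReal_traceNorm (ι := Unit) hT
    (orthonormal_subsingleton_iff.2 fun _ => hξ) (orthonormal_subsingleton_iff.2 fun _ => hη)

end TraceNorm

section WeakIntegral

variable {H : Type*} [NormedAddCommGroup H] [InnerProductSpace ℂ H]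
  {α : Type*} [MeasurableSpace α] {μ : Measure α} {a : α → H →L[ℂ] H}

lemma integrable_inner_of_integrable_traceNorm
    (hmeas : ∀ ξ η : H, AEStronglyMeasurable (fun s => ⟪a s ξ, η⟫) μ)
    (htc : ∀ s, traceNorm (a s) ≠ ⊤) (hint : Integrable (fun s => (traceNorm (a s)).toReal) μ)
    {ξ η : H} (hξ : ‖ξ‖ = 1) (hη : ‖η‖ = 1) :
    Integrable (fun s => ⟪a s ξ, η⟫) μ :=
  hint.mono' (hmeas ξ η) (ae_of_all _ fun s => norm_inner_le_toReal_traceNorm (htc s) hξ hη)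

lemma lintegral_traceNorm_ne_top (htc : ∀ s, traceNorm (a s) ≠ ⊤)
    (hint : Integrable (fun s => (traceNorm (a s)).toReal) μ) :
    ∫⁻ s, traceNorm (a s) ∂μ ≠ ⊤ := by
  simpa only [ENNReal.ofReal_toReal (htc _)] using hint.lintegral_lt_top.ne

lemma traceNorm_le_integral_traceNorm
    (hmeas : ∀ ξ η : H, AEStronglyMeasurable (fun s => ⟪a s ξ, η⟫) μ)
    (htc : ∀ s, traceNorm (a s) ≠ ⊤) (hint : Integrable (fun s => (traceNorm (a s)).toReal) μ)
    (A : H →L[ℂ] H) (hA : ∀ ξ η : H, ⟪A ξ, η⟫ = ∫ s, ⟪a s ξ, η⟫ ∂μ) :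
    traceNorm A ≤ ENNReal.ofReal (∫ s, (traceNorm (a s)).toReal ∂μ) := by
  refine iSup_le fun N => iSup_le fun v => iSup_le fun w => iSup_le fun hv => iSup_le fun hw => ?_
  have hcoef (i : Fin N) : Integrable (fun s => ⟪a s (v i), w i⟫) μ :=
    integrable_inner_of_integrable_traceNorm hmeas htc hint (hv.1 i) (hw.1 i)
  have hreal : ∑ i, ‖⟪A (v i), w i⟫‖ ≤ ∫ s, (traceNorm (a s)).toReal ∂μ :=
    calc ∑ i, ‖⟪A (v i), w i⟫‖
        ≤ ∑ i, ∫ s, ‖⟪a s (v i), w i⟫‖ ∂μ :=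
          Finset.sum_le_sum fun i _ => hA (v i) (w i) ▸ norm_integral_le_integral_norm _
      _ = ∫ s, ∑ i, ‖⟪a s (v i), w i⟫‖ ∂μ :=
          (integral_finsetSum _ fun i _ => (hcoef i).norm).symm
      _ ≤ ∫ s, (traceNorm (a s)).toReal ∂μ :=
          integral_mono (integrable_finsetSum _ fun i _ => (hcoef i).norm) hint
            fun s => sum_norm_inner_le_toReal_traceNorm (htc s) hv hw
  calc ∑ i, (‖⟪A (v i), w i⟫‖₊ : ℝ≥0∞)
      = ENNReal.ofReal (∑ i, ‖⟪A (v i), w i⟫‖) := by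
        rw [ENNReal.ofReal_sum_of_nonneg fun i _ => norm_nonneg _]
        exact Finset.sum_congr rfl fun i _ => (ofReal_norm _).symm
    _ ≤ ENNReal.ofReal (∫ s, (traceNorm (a s)).toReal ∂μ) := ENNReal.ofReal_le_ofReal hreal

lemma tsum_inner_eq_integral_tsum_inner
    (hmeas : ∀ ξ η : H, AEStronglyMeasurable (fun s => ⟪a s ξ, η⟫) μ)
    (htc : ∀ s, traceNorm (a s) ≠ ⊤) (hint : Integrable (fun s => (traceNorm (a s)).toReal) μ)
    {ι : Type*} [Countable ι] {v w : ι → H} (hv : Orthonormal ℂ v) (hw : Orthonormal ℂ w)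
    (A : H →L[ℂ] H) (hA : ∀ ξ η : H, ⟪A ξ, η⟫ = ∫ s, ⟪a s ξ, η⟫ ∂μ) :
    ∑' i, ⟪A (v i), w i⟫ = ∫ s, ∑' i, ⟪a s (v i), w i⟫ ∂μ := by
  have hsum : ∑' i, ∫⁻ s, ‖⟪a s (v i), w i⟫‖ₑ ∂μ ≠ ⊤ := by
    rw [← lintegral_tsum fun i => (hmeas _ _).enorm]
    exact ne_top_of_le_ne_top (lintegral_traceNorm_ne_top htc hint)
      (lintegral_mono fun s => tsum_nnnorm_inner_le_traceNorm (a s) hv hw)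
  rw [integral_tsum (fun i => hmeas _ _) hsum]
  exact tsum_congr fun i => hA _ _

end WeakIntegral

theorem stmt_5_general {H : Type*} [NormedAddCommGroup H] [InnerProductSpace ℂ H]
    (e : HilbertBasis ℕ ℂ H) (a : ℝ → H →L[ℂ] H)
    (hcont : ∀ ξ η : H, Continuous fun s : ℝ => ⟪a s ξ, η⟫)
    (htc : ∀ s : ℝ, traceNorm (a s) ≠ ⊤)
    (hint : Integrable fun s : ℝ => (traceNorm (a s)).toReal)
    (A : H →L[ℂ] H)
    (hA : ∀ ξ η : H, ⟪A ξ, η⟫ = ∫ s : ℝ, ⟪a s ξ, η⟫) :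
    traceNorm A ≤ ENNReal.ofReal (∫ s : ℝ, (traceNorm (a s)).toReal) ∧
      (∑' n : ℕ, ⟪A (e n), e n⟫) = ∫ s : ℝ, ∑' n : ℕ, ⟪a s (e n), e n⟫ := by
  have hmeas (ξ η : H) : AEStronglyMeasurable (fun s => ⟪a s ξ, η⟫) volume :=
    (hcont ξ η).aestronglyMeasurable
  exact ⟨traceNorm_le_integral_traceNorm hmeas htc hint A hA,
    tsum_inner_eq_integral_tsum_inner hmeas htc hint e.orthonormal e.orthonormal A hA⟩

/-- Let `s ↦ a(s)` be WOT-continuous with trace-class values and `∫ ‖a(s)‖₁ ds < ∞`.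
Then the weak integral `A = ∫ a(s) ds` is trace class, `‖A‖₁ ≤ ∫ ‖a(s)‖₁ ds`, and
`Tr(A) = ∫ Tr(a(s)) ds` (traces computed in an orthonormal basis `e`). -/
theorem stmt_5 {H : Type*} [NormedAddCommGroup H] [InnerProductSpace ℂ H] [CompleteSpace H]
    (e : HilbertBasis ℕ ℂ H) (a : ℝ → H →L[ℂ] H)
    (hcont : ∀ ξ η : H, Continuous fun s : ℝ => ⟪a s ξ, η⟫)
    (htc : ∀ s : ℝ, traceNorm (a s) ≠ ⊤)
    (hint : Integrable fun s : ℝ => (traceNorm (a s)).toReal)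
    (A : H →L[ℂ] H)
    (hA : ∀ ξ η : H, ⟪A ξ, η⟫ = ∫ s : ℝ, ⟪a s ξ, η⟫) :
    traceNorm A ≤ ENNReal.ofReal (∫ s : ℝ, (traceNorm (a s)).toReal) ∧
      (∑' n : ℕ, ⟪A (e n), e n⟫) = ∫ s : ℝ, ∑' n : ℕ, ⟪a s (e n), e n⟫ :=
  stmt_5_general e a hcont htc hint A hA
end

section
/- Let f be a smooth function on ℝ with f(t) = |t|^{1/3} for |t| > 1, and for ε > 0 set f_ε(t) := f(t) e^{−ε²t²}. Then sup_{0<ε<1} (‖f_ε′‖_{L₂(ℝ)} + ‖f_ε″‖_{L₂(ℝ)}) < ∞; consequently (via the bound ‖𝓕(g′)‖_{L₁} ≤ c(‖g′‖_{L₂} + ‖g″‖_{L₂})) the L₁-norms of the Fourier transforms 𝓕(f_ε′) are uniformly bounded for ε ∈ (0,1). -/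
open MeasureTheory Real Topology

/-!
For `|t| > 1` one has `f' t = (1/3) |t|^{-5/3} t` and `f'' t = -(2/9) |t|^{-5/3}`, so with
`ρ t = max 1 |t|` there is `K` with `|f| ≤ ρ · K ρ^{-2/3}` and `|f'|, |f''| ≤ K ρ^{-2/3}`.
Differentiating the Gaussian `e^{-ε²t²}` only produces the factors `ε² t`, `ε²` and `ε⁴ t²`;
since `u e^{-u}` and `u² e^{-u}` are bounded (`u = ε²t²`), each of them times the Gaussian is
`O(1/ρ)` uniformly in `ε ≤ 1`, which the extra factor `ρ` in the bound of `f` absorbs. Hence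
`|f_ε'|, |f_ε''| ≤ 15 K ρ^{-2/3}`, a fixed function in `L²`, and the Fourier bound follows by
applying the assumed inequality to `g = f_ε'`.
-/

lemma sq_mul_exp_neg_le_two {x : ℝ} (hx : 0 ≤ x) : x ^ 2 * exp (-x) ≤ 2 := by
  have h := pow_div_factorial_le_exp x hx 2
  rw [exp_neg, ← div_eq_mul_inv, div_le_iff₀ (exp_pos x)]
  norm_num [Nat.factorial] at h
  linarith

lemma gaussian_le_one (ε t : ℝ) : exp (-(ε ^ 2) * t ^ 2) ≤ 1 :=
  exp_le_one_iff.2 (by nlinarith [sq_nonneg ε, sq_nonneg t])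

lemma max_one_abs_mul_gaussian_le {ε : ℝ} (hε : ε ^ 2 ≤ 1) (t : ℝ) :
    max 1 |t| * (ε ^ 2 * |t|) * exp (-(ε ^ 2) * t ^ 2) ≤ 1 ∧
      max 1 |t| * ε ^ 2 * exp (-(ε ^ 2) * t ^ 2) ≤ 1 ∧
      max 1 |t| * (ε ^ 2 * |t|) ^ 2 * exp (-(ε ^ 2) * t ^ 2) ≤ 2 := by
  have hE1 := gaussian_le_one ε t
  set E := exp (-(ε ^ 2) * t ^ 2)
  have hu : ε ^ 2 * t ^ 2 * E ≤ 1 := by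
    simpa [E, neg_mul] using (mul_exp_neg_le_exp_neg_one (ε ^ 2 * t ^ 2)).trans
      (exp_le_one_iff.2 (by norm_num))
  have hu2 : (ε ^ 2 * t ^ 2) ^ 2 * E ≤ 2 := by
    simpa [E, neg_mul] using sq_mul_exp_neg_le_two (by positivity : 0 ≤ ε ^ 2 * t ^ 2)
  have hε0 := sq_nonneg ε
  rcases le_or_gt |t| 1 with ht | ht
  · rw [max_eq_left ht, one_mul, one_mul, one_mul]
    have h1 : ε ^ 2 * |t| ≤ 1 := by nlinarith [abs_nonneg t]
    have h2 : 0 ≤ ε ^ 2 * |t| := by positivity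
    refine ⟨by nlinarith, by nlinarith, by nlinarith⟩
  · rw [max_eq_right ht.le]
    have ht2 : t ^ 2 = |t| ^ 2 := (sq_abs t).symm
    rw [ht2] at hu hu2
    have h3 : |t| ≤ |t| ^ 2 := by nlinarith
    refine ⟨by nlinarith, by nlinarith, ?_⟩
    have : |t| * (ε ^ 2 * |t|) ^ 2 ≤ (ε ^ 2 * |t| ^ 2) ^ 2 := by
      have := mul_le_mul_of_nonneg_left h3 (by positivity : 0 ≤ ε ^ 4 * |t| ^ 2)
      nlinarith
    nlinarith

lemma hasDerivAt_gaussian (ε t : ℝ) :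
    HasDerivAt (fun t => exp (-(ε ^ 2) * t ^ 2))
      (-2 * ε ^ 2 * t * exp (-(ε ^ 2) * t ^ 2)) t := by
  have := ((hasDerivAt_pow 2 t).const_mul (-(ε ^ 2))).exp
  convert this using 1
  push_cast
  ring

lemma deriv_mul_gaussian {f : ℝ → ℝ} (hf : Differentiable ℝ f) (ε : ℝ) :
    deriv (fun t => f t * exp (-(ε ^ 2) * t ^ 2)) =
      fun t => (deriv f t - 2 * ε ^ 2 * t * f t) * exp (-(ε ^ 2) * t ^ 2) := by
  funext t
  exact ((hf t).hasDerivAt.mul (hasDerivAt_gaussian ε t)).deriv.trans (by ring)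

lemma deriv_deriv_mul_gaussian {f : ℝ → ℝ} (hf : Differentiable ℝ f)
    (hf' : Differentiable ℝ (deriv f)) (ε : ℝ) :
    deriv (deriv fun t => f t * exp (-(ε ^ 2) * t ^ 2)) =
      fun t => (deriv (deriv f) t - 4 * ε ^ 2 * t * deriv f t
        + (4 * ε ^ 4 * t ^ 2 - 2 * ε ^ 2) * f t) * exp (-(ε ^ 2) * t ^ 2) := by
  have hg : ∀ t, HasDerivAt (fun t => deriv f t - 2 * ε ^ 2 * t * f t)
      (deriv (deriv f) t - 2 * ε ^ 2 * (t * deriv f t + f t)) t := by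
    intro t
    have := (hf' t).hasDerivAt.sub
      (((hasDerivAt_id t).mul (hf t).hasDerivAt).const_mul (2 * ε ^ 2))
    exact (this.congr_deriv (by simp only [id]; ring)).congr_of_eventuallyEq
      (.of_forall fun y => by simp only [Pi.sub_apply, Pi.mul_apply, id]; ring)
  rw [deriv_mul_gaussian hf, deriv_mul_gaussian fun t => (hg t).differentiableAt]
  funext t
  rw [(hg t).deriv]
  ring

section GaussianDamping

variable {f : ℝ → ℝ} {ε t w : ℝ}

lemma abs_deriv_mul_gaussian_le (hf : Differentiable ℝ f) (hε : ε ^ 2 ≤ 1)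
    (h₀ : |f t| ≤ max 1 |t| * w) (h₁ : |deriv f t| ≤ w) :
    |deriv (fun t => f t * exp (-(ε ^ 2) * t ^ 2)) t| ≤ 3 * w := by
  rw [deriv_mul_gaussian hf]
  obtain ⟨hw₁, -, -⟩ := max_one_abs_mul_gaussian_le hε t
  have hw : 0 ≤ w := (abs_nonneg _).trans h₁
  have hE := exp_pos (-(ε ^ 2) * t ^ 2)
  have hE₁ := gaussian_le_one ε t
  set E := exp (-(ε ^ 2) * t ^ 2)
  have h2 : |2 * ε ^ 2 * t * f t| = 2 * (ε ^ 2 * |t|) * |f t| := by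
    simp only [abs_mul, abs_two, abs_pow, sq_abs]; ring
  calc |(deriv f t - 2 * ε ^ 2 * t * f t) * E|
      = |deriv f t - 2 * ε ^ 2 * t * f t| * E := by rw [abs_mul, abs_of_pos hE]
    _ ≤ (|deriv f t| + 2 * (ε ^ 2 * |t|) * |f t|) * E := by
        gcongr; exact h2 ▸ abs_sub _ _
    _ ≤ (w + 2 * (ε ^ 2 * |t|) * (max 1 |t| * w)) * E := by gcongr
    _ = w * E + 2 * w * (max 1 |t| * (ε ^ 2 * |t|) * E) := by ring
    _ ≤ w * 1 + 2 * w * 1 := by gcongr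
    _ = 3 * w := by ring

lemma abs_deriv_deriv_mul_gaussian_le (hf : Differentiable ℝ f)
    (hf' : Differentiable ℝ (deriv f)) (hε : ε ^ 2 ≤ 1)
    (h₀ : |f t| ≤ max 1 |t| * w) (h₁ : |deriv f t| ≤ w) (h₂ : |deriv (deriv f) t| ≤ w) :
    |deriv (deriv fun t => f t * exp (-(ε ^ 2) * t ^ 2)) t| ≤ 15 * w := by
  rw [deriv_deriv_mul_gaussian hf hf']
  obtain ⟨hw₁, hw₂, hw₃⟩ := max_one_abs_mul_gaussian_le hε t
  have hw : 0 ≤ w := (abs_nonneg _).trans h₁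
  have hE := exp_pos (-(ε ^ 2) * t ^ 2)
  set E := exp (-(ε ^ 2) * t ^ 2)
  have hw₀ : ε ^ 2 * |t| * E ≤ 1 := by
    refine le_trans ?_ hw₁
    have : 0 ≤ ε ^ 2 * |t| * E := by positivity
    nlinarith [le_max_left 1 |t|]
  have h4 : |4 * ε ^ 2 * t * deriv f t| = 4 * (ε ^ 2 * |t|) * |deriv f t| := by
    simp only [abs_mul, abs_pow, sq_abs, abs_of_pos (by norm_num : (0 : ℝ) < 4)]; ring
  have hcoef : |4 * ε ^ 4 * t ^ 2 - 2 * ε ^ 2| ≤ 4 * (ε ^ 2 * |t|) ^ 2 + 2 * ε ^ 2 := by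
    have : (ε ^ 2 * |t|) ^ 2 = ε ^ 4 * t ^ 2 := by rw [mul_pow, sq_abs]; ring
    rw [abs_le, this]; constructor <;> nlinarith [sq_nonneg (ε ^ 2 * t), sq_nonneg ε]
  calc |(deriv (deriv f) t - 4 * ε ^ 2 * t * deriv f t
          + (4 * ε ^ 4 * t ^ 2 - 2 * ε ^ 2) * f t) * E|
      = |deriv (deriv f) t - 4 * ε ^ 2 * t * deriv f t
          + (4 * ε ^ 4 * t ^ 2 - 2 * ε ^ 2) * f t| * E := by rw [abs_mul, abs_of_pos hE]
    _ ≤ (|deriv (deriv f) t| + 4 * (ε ^ 2 * |t|) * |deriv f t|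
          + (4 * (ε ^ 2 * |t|) ^ 2 + 2 * ε ^ 2) * |f t|) * E := by
        gcongr
        refine (abs_add_le _ _).trans (add_le_add ((abs_sub _ _).trans_eq (by rw [h4])) ?_)
        rw [abs_mul]
        gcongr
    _ ≤ (w + 4 * (ε ^ 2 * |t|) * w
          + (4 * (ε ^ 2 * |t|) ^ 2 + 2 * ε ^ 2) * (max 1 |t| * w)) * E := by
        gcongr
    _ = w * E + 4 * w * (ε ^ 2 * |t| * E) + 4 * w * (max 1 |t| * (ε ^ 2 * |t|) ^ 2 * E)
          + 2 * w * (max 1 |t| * ε ^ 2 * E) := by ring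
    _ ≤ w * 1 + 4 * w * 1 + 4 * w * 2 + 2 * w * 1 := by
        gcongr
        exact gaussian_le_one ε t
    _ = 15 * w := by ring

end GaussianDamping

section AbsRpow

variable {p x : ℝ}

lemma hasDerivAt_abs_rpow_of_ne_zero (p : ℝ) (hx : x ≠ 0) :
    HasDerivAt (fun y => |y| ^ p) (p * |x| ^ (p - 2) * x) x := by
  have hx' : |x| ≠ 0 := abs_ne_zero.2 hx
  convert (hasDerivAt_abs hx).rpow_const (p := p) (Or.inl hx') using 1
  rw [show p - 1 = p - 2 + 1 by ring, rpow_add_one hx']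
  linear_combination -(p * |x| ^ (p - 2)) * sign_mul_abs x

lemma hasDerivAt_abs_rpow_mul_of_ne_zero (p : ℝ) (hx : x ≠ 0) :
    HasDerivAt (fun y => p * |y| ^ (p - 2) * y) (p * (p - 1) * |x| ^ (p - 2)) x := by
  have hx' : |x| ≠ 0 := abs_ne_zero.2 hx
  have hsq : |x| ^ (p - 2 - 2) * x * x = |x| ^ (p - 2) := by
    rw [mul_assoc, ← abs_mul_abs_self, show p - 2 = p - 2 - 2 + 1 + 1 by ring,
      rpow_add_one hx', rpow_add_one hx']
    ring_nf
  have := ((hasDerivAt_abs_rpow_of_ne_zero (p - 2) hx).mul (hasDerivAt_id x)).const_mul p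
  refine (this.congr_deriv ?_).congr_of_eventuallyEq
    (.of_forall fun y => by simp only [Pi.mul_apply, id]; ring)
  simp only [id]
  linear_combination p * (p - 2) * hsq

lemma deriv_eq_of_eventuallyEq_abs_rpow {f : ℝ → ℝ} (hx : x ≠ 0)
    (h : f =ᶠ[𝓝 x] fun y => |y| ^ p) :
    deriv f x = p * |x| ^ (p - 2) * x ∧ deriv (deriv f) x = p * (p - 1) * |x| ^ (p - 2) := by
  have hderiv : deriv f =ᶠ[𝓝 x] fun y => p * |y| ^ (p - 2) * y := by
    filter_upwards [h.deriv, isOpen_ne.mem_nhds hx] with y hy hy0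
    exact hy.trans (hasDerivAt_abs_rpow_of_ne_zero p hy0).deriv
  exact ⟨hderiv.self_of_nhds,
    hderiv.deriv_eq.trans (hasDerivAt_abs_rpow_mul_of_ne_zero p hx).deriv⟩

end AbsRpow

lemma exists_bound_of_eq_abs_rpow {f : ℝ → ℝ} {p : ℝ} (hf : ContDiff ℝ 2 f)
    (hfp : ∀ t, 1 < |t| → f t = |t| ^ p) :
    ∃ K, ∀ t, |f t| ≤ max 1 |t| * (K * max 1 |t| ^ (p - 1)) ∧
      |deriv f t| ≤ K * max 1 |t| ^ (p - 1) ∧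
      |deriv (deriv f) t| ≤ K * max 1 |t| ^ (p - 1) := by
  have hf' : ContDiff ℝ 1 (deriv f) := (contDiff_succ_iff_deriv.mp hf).2.2
  have hcont : Continuous fun t => |f t| + |deriv f t| + |deriv (deriv f) t| := by
    have := hf.continuous; have := hf'.continuous; have := hf'.continuous_deriv le_rfl
    fun_prop
  obtain ⟨M, hM⟩ := (isCompact_Icc (a := -1) (b := 1)).exists_bound_of_continuousOn
    hcont.continuousOn
  set K := max M 1 + |p| + |p * (p - 1)|
  have hK : M ≤ K ∧ 1 ≤ K ∧ |p| ≤ K ∧ |p * (p - 1)| ≤ K := by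
    refine ⟨?_, ?_, ?_, ?_⟩ <;>
      linarith [le_max_left M 1, le_max_right M 1, abs_nonneg p, abs_nonneg (p * (p - 1))]
  refine ⟨K, fun t => ?_⟩
  rcases le_or_gt |t| 1 with ht | ht
  · have hMt := hM t (abs_le.1 ht)
    rw [Real.norm_eq_abs, abs_of_nonneg (by positivity)] at hMt
    rw [max_eq_left ht, one_rpow, one_mul, mul_one]
    refine ⟨?_, ?_, ?_⟩ <;>
      linarith [abs_nonneg (f t), abs_nonneg (deriv f t), abs_nonneg (deriv (deriv f) t)]
  · have ht₀ : 0 < |t| := one_pos.trans ht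
    have hfeq : f =ᶠ[𝓝 t] fun y => |y| ^ p := by
      filter_upwards [(isOpen_lt continuous_const continuous_abs).mem_nhds ht] with y hy
      exact hfp y hy
    obtain ⟨hd₁, hd₂⟩ := deriv_eq_of_eventuallyEq_abs_rpow (abs_pos.1 ht₀) hfeq
    rw [max_eq_right ht.le]
    have hR : 0 < |t| ^ (p - 1) := rpow_pos_of_pos ht₀ _
    have hmul : |t| ^ (p - 2) * |t| = |t| ^ (p - 1) := by
      rw [← rpow_add_one ht₀.ne']; ring_nf
    refine ⟨?_, ?_, ?_⟩
    · calc |f t| = |t| * |t| ^ (p - 1) := by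
            rw [hfp t ht, abs_of_pos (rpow_pos_of_pos ht₀ _), rpow_sub_one ht₀.ne']; field_simp
        _ ≤ |t| * (K * |t| ^ (p - 1)) := by gcongr; exact le_mul_of_one_le_left hR.le hK.2.1
    · rw [hd₁, abs_mul, abs_mul, abs_of_pos (rpow_pos_of_pos ht₀ _), mul_assoc, hmul]
      exact mul_le_mul_of_nonneg_right hK.2.2.1 hR.le
    · rw [hd₂, abs_mul, abs_of_pos (rpow_pos_of_pos ht₀ _)]
      exact mul_le_mul hK.2.2.2 (rpow_le_rpow_of_exponent_le ht.le (by linarith)) (by positivity)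
        (by linarith [hK.2.1])

lemma memLp_two_max_one_abs_rpow {a : ℝ} (ha : a < -1 / 2) :
    MemLp (fun t : ℝ => max 1 |t| ^ a) 2 volume := by
  have hpos (t : ℝ) : 0 < max 1 |t| := lt_max_of_lt_left one_pos
  have hcont : Continuous fun t : ℝ => max 1 |t| ^ a :=
    (continuous_const.max continuous_abs).rpow_const fun t => Or.inl (hpos t).ne'
  rw [memLp_two_iff_integrable_sq hcont.aestronglyMeasurable]
  have hint := (integrable_one_add_norm (E := ℝ) (μ := volume) (r := -(2 * a))
    (by simp; linarith)).const_mul (2 ^ (-(2 * a)))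
  refine hint.mono' (hcont.pow 2).aestronglyMeasurable (.of_forall fun t => ?_)
  rw [Real.norm_eq_abs, abs_of_nonneg (by positivity), ← rpow_natCast, ← rpow_mul (hpos t).le,
    Real.norm_eq_abs, neg_neg]
  calc max 1 |t| ^ (a * (2 : ℕ)) ≤ ((1 + |t|) / 2) ^ (a * (2 : ℕ)) := by
        refine rpow_le_rpow_of_nonpos (by positivity) ?_ (by push_cast; linarith)
        linarith [le_max_left 1 |t|, le_max_right 1 |t|]
    _ = 2 ^ (-(2 * a)) * (1 + |t|) ^ (2 * a) := by
        rw [div_rpow (by positivity) zero_le_two, rpow_neg zero_le_two]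
        push_cast
        rw [mul_comm a 2]
        ring

theorem exists_eLpNorm_deriv_mul_gaussian_le {f : ℝ → ℝ} {p : ℝ} (hf : ContDiff ℝ 2 f)
    (hfp : ∀ t, 1 < |t| → f t = |t| ^ p) (hp : p < 1 / 2) :
    ∃ C : ℝ, 0 ≤ C ∧ ∀ ε : ℝ, ε ^ 2 ≤ 1 →
      eLpNorm (deriv fun t => f t * exp (-(ε ^ 2) * t ^ 2)) 2 volume ≤ ENNReal.ofReal C ∧
        eLpNorm (deriv (deriv fun t => f t * exp (-(ε ^ 2) * t ^ 2))) 2 volume ≤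
          ENNReal.ofReal C := by
  have hd : Differentiable ℝ f := hf.differentiable two_ne_zero
  have hd' : Differentiable ℝ (deriv f) :=
    (contDiff_succ_iff_deriv.mp hf).2.2.differentiable one_ne_zero
  obtain ⟨K, hK⟩ := exists_bound_of_eq_abs_rpow hf hfp
  have hw : MemLp (fun t => 15 * (K * max 1 |t| ^ (p - 1))) 2 volume :=
    ((memLp_two_max_one_abs_rpow (by linarith)).const_mul K).const_mul 15
  refine ⟨(eLpNorm (fun t => 15 * (K * max 1 |t| ^ (p - 1))) 2 volume).toReal,
    ENNReal.toReal_nonneg, fun ε hε => ?_⟩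
  rw [ENNReal.ofReal_toReal hw.eLpNorm_ne_top]
  refine ⟨eLpNorm_mono_real fun t => ?_, eLpNorm_mono_real fun t => ?_⟩ <;>
    obtain ⟨h₀, h₁, h₂⟩ := hK t <;> rw [Real.norm_eq_abs]
  · have hw₀ := (abs_nonneg _).trans h₁
    linarith [abs_deriv_mul_gaussian_le hd hε h₀ h₁]
  · exact abs_deriv_deriv_mul_gaussian_le hd hd' hε h₀ h₁ h₂

theorem stmt_17_general (f : ℝ → ℝ) (hf : ContDiff ℝ (⊤ : ℕ∞) f)
    (hf1 : ∀ t : ℝ, 1 < |t| → f t = |t| ^ ((1 : ℝ) / 3))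
    (c : ℝ)
    (hFour : ∀ g : ℝ → ℝ, MemLp g 2 volume → MemLp (deriv g) 2 volume →
      eLpNorm (FourierTransform.fourier (fun t : ℝ => (g t : ℂ)) : ℝ → ℂ) 1 volume ≤
        ENNReal.ofReal (c * ((eLpNorm g 2 volume).toReal + (eLpNorm (deriv g) 2 volume).toReal))) :
    (∃ C : ℝ, ∀ ε : ℝ, 0 < ε → ε < 1 →
      eLpNorm (deriv fun t : ℝ => f t * Real.exp (-(ε ^ 2) * t ^ 2)) 2 volume ≤
          ENNReal.ofReal C ∧
        eLpNorm (deriv (deriv fun t : ℝ => f t * Real.exp (-(ε ^ 2) * t ^ 2))) 2 volume ≤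
          ENNReal.ofReal C) ∧
    ∃ C' : ℝ, ∀ ε : ℝ, 0 < ε → ε < 1 →
      eLpNorm (FourierTransform.fourier
          (fun t : ℝ => (((deriv fun u : ℝ => f u * Real.exp (-(ε ^ 2) * u ^ 2)) t : ℝ) : ℂ)) : ℝ → ℂ)
        1 volume ≤ ENNReal.ofReal C' := by
  obtain ⟨C, hC₀, hC⟩ :=
    exists_eLpNorm_deriv_mul_gaussian_le (hf.of_le (WithTop.coe_le_coe.2 le_top)) hf1
      (by norm_num)
  have hC' (ε : ℝ) (h₀ : 0 < ε) (h₁ : ε < 1) := hC ε (by nlinarith)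
  refine ⟨⟨C, hC'⟩, |c| * (C + C), fun ε h₀ h₁ => ?_⟩
  obtain ⟨hF₁, hF₂⟩ := hC' ε h₀ h₁
  have hmem {g : ℝ → ℝ} (hg : eLpNorm (deriv g) 2 volume ≤ ENNReal.ofReal C) :
      MemLp (deriv g) 2 volume :=
    ⟨(measurable_deriv g).aestronglyMeasurable, hg.trans_lt ENNReal.ofReal_lt_top⟩
  refine (hFour _ (hmem hF₁) (hmem hF₂)).trans (ENNReal.ofReal_le_ofReal ?_)
  calc c * ((eLpNorm _ 2 volume).toReal + (eLpNorm _ 2 volume).toReal)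
      ≤ |c| * ((eLpNorm _ 2 volume).toReal + (eLpNorm _ 2 volume).toReal) := by
        gcongr; exact le_abs_self c
    _ ≤ |c| * (C + C) := by
        gcongr <;> exact ENNReal.toReal_le_of_le_ofReal hC₀ ‹_›

/-- Let `f` be smooth with `f(t) = |t|^{1/3}` for `|t| > 1`, and `f_ε(t) = f(t)e^{-ε²t²}`.
Then the `L²` norms of `f_ε'` and `f_ε''` are uniformly bounded for `ε ∈ (0,1)`;
consequently, via the Fourier bound `‖𝓕 g‖_{L¹} ≤ c(‖g‖_{L²} + ‖g'‖_{L²})` (assumed as a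
black box), the `L¹` norms of the Fourier transforms `𝓕(f_ε')` are uniformly bounded. -/
theorem stmt_17 (f : ℝ → ℝ) (hf : ContDiff ℝ (⊤ : ℕ∞) f)
    (hf1 : ∀ t : ℝ, 1 < |t| → f t = |t| ^ ((1 : ℝ) / 3))
    (c : ℝ) (hc : 0 < c)
    (hFour : ∀ g : ℝ → ℝ, MemLp g 2 volume → MemLp (deriv g) 2 volume →
      eLpNorm (FourierTransform.fourier (fun t : ℝ => (g t : ℂ)) : ℝ → ℂ) 1 volume ≤
        ENNReal.ofReal (c * ((eLpNorm g 2 volume).toReal + (eLpNorm (deriv g) 2 volume).toReal))) :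
    (∃ C : ℝ, ∀ ε : ℝ, 0 < ε → ε < 1 →
      eLpNorm (deriv fun t : ℝ => f t * Real.exp (-(ε ^ 2) * t ^ 2)) 2 volume ≤
          ENNReal.ofReal C ∧
        eLpNorm (deriv (deriv fun t : ℝ => f t * Real.exp (-(ε ^ 2) * t ^ 2))) 2 volume ≤
          ENNReal.ofReal C) ∧
    ∃ C' : ℝ, ∀ ε : ℝ, 0 < ε → ε < 1 →
      eLpNorm (FourierTransform.fourier
          (fun t : ℝ => (((deriv fun u : ℝ => f u * Real.exp (-(ε ^ 2) * u ^ 2)) t : ℝ) : ℂ)) : ℝ → ℂ)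
        1 volume ≤ ENNReal.ofReal C' :=
  stmt_17_general f hf hf1 c hFour
end
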